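/- Let v = (v_k)_{k≥1} be nonnegative reals with Σ_{k=1}^∞ v_k = 1, let V(x) := Σ_{k=1}^∞ v_k e^{−kx} − 1, and assume lim_{x→0⁺} V'(x) = −∞. Then for every x > 0, with E*(x) := sup_{0<y≤x} E(y) and E_*(x) := inf_{0<y≤x} E(y) assumed finite and positive respectively: (i) √2·E_*(x)^{1/2}·x^{1/2} ≤ −V(x) ≤ √2·E*(x)^{1/2}·x^{1/2}; (ii) 2^{−1/2}·E_*(x)·E*(x)^{−1/2}·x^{−1/2} ≤ −V'(x) ≤ 2^{−1/2}·E*(x)·E_*(x)^{−1/2}·x^{−1/2}; (iii) 2^{−3/2}·E_*(x)³·E*(x)^{−5/2}·x^{−3/2} ≤ V''(x) ≤ 2^{−3/2}·E*(x)³·E_*(x)^{−5/2}·x^{−3/2}; (iv) E_*(x) ≤ V(x)·V'(x) ≤ E*(x). -/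

import Mathlib

/-- The generating function of a (sub-)probability distribution `(v_k)_{k ≥ 1}`:
`V(x) = ∑_{k≥1} v_k e^(−kx) − 1`. -/
noncomputable def genFun (v : ℕ → ℝ) (x : ℝ) : ℝ :=
  (∑' k : ℕ, v (k + 1) * Real.exp (-((k : ℝ) + 1) * x)) - 1

/-- `E(x) = −V'(x)³ / V''(x)`. -/
noncomputable def EFun (v : ℕ → ℝ) (x : ℝ) : ℝ :=
  -(deriv (genFun v) x) ^ 3 / iteratedDeriv 2 (genFun v) x

/-!
Write `W = -V'` and `E = W³ / V''`. Then `(W⁻²)' = 2 / E`, and `W⁻² → 0` at `0⁺` because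
`V'(0⁺) = -∞`; comparing derivatives on `(0, x]` gives `2x / E* ≤ W(x)⁻² ≤ 2x / E_*`, that is
`√E_* / √(2x) ≤ -V'(x) ≤ √E* / √(2x)`. Since `V(0⁺) = ∑ v_k - 1 = 0`, a second comparison, with
`t ↦ √E · √(2t)`, gives `√E_* · √(2x) ≤ -V(x) ≤ √E* · √(2x)`. The bounds on `V'' = W³ / E` and
on `V V' = (-V) W` follow algebraically; (ii) and (iii) are weakened forms, via
`E_* / √E* ≤ √E_*`.
-/

open Real Filter Set Topology

theorem le_of_tendsto_nhdsGT_of_hasDerivAt_le {f g f' g' : ℝ → ℝ} {a x L : ℝ} (hax : a < x)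
    (hf : Tendsto f (𝓝[>] a) (𝓝 L)) (hg : Tendsto g (𝓝[>] a) (𝓝 L))
    (hf' : ∀ y ∈ Ioc a x, HasDerivAt f (f' y) y) (hg' : ∀ y ∈ Ioc a x, HasDerivAt g (g' y) y)
    (hle : ∀ y ∈ Ioc a x, f' y ≤ g' y) : f x ≤ g x := by
  have hderiv : ∀ y ∈ Ioc a x, HasDerivAt (fun t => g t - f t) (g' y - f' y) y :=
    fun y hy => (hg' y hy).sub (hf' y hy)
  have hmono : MonotoneOn (fun t => g t - f t) (Ioc a x) := by
    refine monotoneOn_of_hasDerivWithinAt_nonneg (convex_Ioc a x)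
      (fun y hy => (hderiv y hy).continuousAt.continuousWithinAt)
      (fun y hy => (hderiv y (interior_subset hy)).hasDerivWithinAt)
      (fun y hy => sub_nonneg.2 (hle y (interior_subset hy)))
  have hlim : Tendsto (fun t => g t - f t) (𝓝[>] a) (𝓝 0) := by simpa using hg.sub hf
  have : 0 ≤ g x - f x := le_of_tendsto hlim <| by
    filter_upwards [Ioo_mem_nhdsGT hax] with y hy
    exact hmono ⟨hy.1, hy.2.le⟩ ⟨hax, le_rfl⟩ hy.2.le
  linarith

/-- With `W = V'`, the derivative is `2 / E`. It is also correct when `w' = 0`: both sides are `0`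
because `a / 0 = 0`. -/
theorem HasDerivAt.inv_sq {W : ℝ → ℝ} {w' y : ℝ} (hW : HasDerivAt W w' y) (hy : W y ≠ 0) :
    HasDerivAt (fun t => (W t ^ 2)⁻¹) (2 / (-W y ^ 3 / w')) y :=
  ((hW.pow 2).inv (pow_ne_zero 2 hy)).congr_deriv <| by
    simp only [Pi.pow_apply]
    field_simp
    ring

theorem hasDerivAt_mul_sqrt_two_mul (c : ℝ) {y : ℝ} (hy : 0 < y) :
    HasDerivAt (fun t => c * √(2 * t)) (c / √(2 * y)) y :=
  ((((hasDerivAt_id' y).const_mul 2).sqrt (by positivity)).const_mul c).congr_deriv <| by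
    field_simp

theorem sqrt_div_sqrt_le_of_inv_sq_le {w c s : ℝ} (hw : 0 < w) (hc : 0 < c) (hs : 0 < s)
    (h : (w ^ 2)⁻¹ ≤ s / c) : √c / √s ≤ w := by
  rw [← sqrt_div' _ hs.le, sqrt_le_left hw.le]
  rwa [inv_le_comm₀ (by positivity) (by positivity), inv_div] at h

theorem le_sqrt_div_sqrt_of_le_inv_sq {w c s : ℝ} (hw : 0 < w) (hc : 0 < c) (hs : 0 < s)
    (h : s / c ≤ (w ^ 2)⁻¹) : w ≤ √c / √s := by
  rw [← sqrt_div' _ hs.le, le_sqrt hw.le (by positivity)]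
  rwa [le_inv_comm₀ (by positivity) (by positivity), inv_div] at h

/-- The paper's `E`; `EFun v` is `derivCubeRatio (genFun v)` by definition. -/
noncomputable def derivCubeRatio (V : ℝ → ℝ) (x : ℝ) : ℝ :=
  -deriv V x ^ 3 / iteratedDeriv 2 V x

section CalculusBounds

variable {V : ℝ → ℝ} {x m M : ℝ}

theorem inv_sq_deriv_bounds_of_derivCubeRatio_mem_Icc (hx : 0 < x) (hm : 0 < m)
    (hdiff' : ∀ y ∈ Ioc 0 x, DifferentiableAt ℝ (deriv V) y)
    (hV' : Tendsto (deriv V) (𝓝[>] 0) atBot)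
    (hE : ∀ y ∈ Ioc 0 x, derivCubeRatio V y ∈ Icc m M) :
    2 * x / M ≤ (deriv V x ^ 2)⁻¹ ∧ (deriv V x ^ 2)⁻¹ ≤ 2 * x / m := by
  have hEpos : ∀ y ∈ Ioc 0 x, 0 < derivCubeRatio V y :=
    fun y hy => hm.trans_le (hE y hy).1
  have hG : ∀ y ∈ Ioc 0 x, HasDerivAt (fun t => (deriv V t ^ 2)⁻¹)
      (2 / derivCubeRatio V y) y := by
    intro y hy
    have hne : deriv V y ≠ 0 := by
      rintro h
      simpa [derivCubeRatio, h] using hEpos y hy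
    rw [derivCubeRatio, iteratedDeriv_succ, iteratedDeriv_one]
    exact (hdiff' y hy).hasDerivAt.inv_sq hne
  have hG0 : Tendsto (fun t => (deriv V t ^ 2)⁻¹) (𝓝[>] 0) (𝓝 0) := by
    simp only [sq]
    exact (hV'.atBot_mul_atBot₀ hV').inv_tendsto_atTop
  have hlin : ∀ c : ℝ, Tendsto (fun t => 2 * t / c) (𝓝[>] 0) (𝓝 0) := fun c =>
    tendsto_nhdsWithin_of_tendsto_nhds <| by
      simpa using ((continuous_const.mul continuous_id).div_const c).tendsto (0 : ℝ)
  have hlin' : ∀ c y : ℝ, HasDerivAt (fun t => 2 * t / c) (2 / c) y := fun c y => by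
    simpa using ((hasDerivAt_id' y).const_mul 2).div_const c
  have hM : 0 < M := (hEpos x ⟨hx, le_rfl⟩).trans_le (hE x ⟨hx, le_rfl⟩).2
  constructor
  · refine le_of_tendsto_nhdsGT_of_hasDerivAt_le hx (hlin M) hG0 (fun y _ => hlin' M y) hG
      fun y hy => ?_
    exact div_le_div_of_nonneg_left zero_le_two (hEpos y hy) (hE y hy).2
  · refine le_of_tendsto_nhdsGT_of_hasDerivAt_le hx hG0 (hlin m) hG (fun y _ => hlin' m y)
      fun y hy => ?_
    exact div_le_div_of_nonneg_left zero_le_two hm (hE y hy).1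

theorem neg_deriv_bounds_of_derivCubeRatio_mem_Icc (hx : 0 < x) (hm : 0 < m)
    (hdiff' : ∀ y ∈ Ioc 0 x, DifferentiableAt ℝ (deriv V) y)
    (hV' : Tendsto (deriv V) (𝓝[>] 0) atBot) (hneg : deriv V x < 0)
    (hE : ∀ y ∈ Ioc 0 x, derivCubeRatio V y ∈ Icc m M) :
    √m / √(2 * x) ≤ -deriv V x ∧ -deriv V x ≤ √M / √(2 * x) := by
  have hM : m ≤ M := (hE x ⟨hx, le_rfl⟩).1.trans (hE x ⟨hx, le_rfl⟩).2
  obtain ⟨hlow, hup⟩ := inv_sq_deriv_bounds_of_derivCubeRatio_mem_Icc hx hm hdiff' hV' hE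
  rw [← neg_sq] at hlow hup
  exact ⟨sqrt_div_sqrt_le_of_inv_sq_le (neg_pos.2 hneg) hm (by positivity) hup,
    le_sqrt_div_sqrt_of_le_inv_sq (neg_pos.2 hneg) (hm.trans_le hM) (by positivity) hlow⟩

theorem neg_bounds_of_derivCubeRatio_mem_Icc (hx : 0 < x) (hm : 0 < m)
    (hdiff : ∀ y ∈ Ioc 0 x, DifferentiableAt ℝ V y)
    (hdiff' : ∀ y ∈ Ioc 0 x, DifferentiableAt ℝ (deriv V) y)
    (hV : Tendsto V (𝓝[>] 0) (𝓝 0)) (hV' : Tendsto (deriv V) (𝓝[>] 0) atBot)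
    (hneg : ∀ y ∈ Ioc 0 x, deriv V y < 0)
    (hE : ∀ y ∈ Ioc 0 x, derivCubeRatio V y ∈ Icc m M) :
    √m * √(2 * x) ≤ -V x ∧ -V x ≤ √M * √(2 * x) := by
  have hderiv_bounds : ∀ y ∈ Ioc 0 x,
      √m / √(2 * y) ≤ -deriv V y ∧ -deriv V y ≤ √M / √(2 * y) := fun y hy =>
    have hsub : Ioc 0 y ⊆ Ioc 0 x := Ioc_subset_Ioc_right hy.2
    neg_deriv_bounds_of_derivCubeRatio_mem_Icc hy.1 hm (fun t ht => hdiff' t (hsub ht)) hV'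
      (hneg y hy) fun t ht => hE t (hsub ht)
  have hsqrt : ∀ c : ℝ, Tendsto (fun t => c * √(2 * t)) (𝓝[>] 0) (𝓝 0) := fun c =>
    tendsto_nhdsWithin_of_tendsto_nhds <| by
      have hcont : Continuous fun t : ℝ => c * √(2 * t) := by fun_prop
      simpa using hcont.tendsto 0
  have hsqrt' : ∀ c, ∀ y ∈ Ioc 0 x, HasDerivAt (fun t => c * √(2 * t)) (c / √(2 * y)) y :=
    fun c y hy => hasDerivAt_mul_sqrt_two_mul c hy.1
  have hU : Tendsto (fun t => -V t) (𝓝[>] 0) (𝓝 0) := by simpa using hV.neg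
  have hU' : ∀ y ∈ Ioc 0 x, HasDerivAt (fun t => -V t) (-deriv V y) y :=
    fun y hy => (hdiff y hy).hasDerivAt.neg
  exact ⟨le_of_tendsto_nhdsGT_of_hasDerivAt_le hx (hsqrt √m) hU (hsqrt' √m) hU'
      fun y hy => (hderiv_bounds y hy).1,
    le_of_tendsto_nhdsGT_of_hasDerivAt_le hx hU (hsqrt √M) hU' (hsqrt' √M)
      fun y hy => (hderiv_bounds y hy).2⟩

end CalculusBounds

noncomputable def tiltedMoment (v : ℕ → ℝ) (n : ℕ) (x : ℝ) : ℝ :=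
  ∑' k : ℕ, ((k : ℝ) + 1) ^ n * v (k + 1) * exp (-((k : ℝ) + 1) * x)

theorem summable_succ_pow_mul_exp_neg (n : ℕ) {c : ℝ} (hc : 0 < c) :
    Summable fun k : ℕ => ((k : ℝ) + 1) ^ n * exp (-((k : ℝ) + 1) * c) := by
  have := (summable_nat_add_iff 1).2 (Real.summable_pow_mul_exp_neg_nat_mul n hc)
  refine this.congr fun k => ?_
  push_cast
  ring_nf

section TiltedMoment

variable {v : ℕ → ℝ}

theorem succ_pow_mul_mul_exp_le (hv : ∀ k, 0 ≤ v (k + 1)) (hsum : HasSum (fun k => v (k + 1)) 1)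
    (n k : ℕ) {c y : ℝ} (hcy : c ≤ y) :
    ((k : ℝ) + 1) ^ n * v (k + 1) * exp (-((k : ℝ) + 1) * y)
      ≤ ((k : ℝ) + 1) ^ n * exp (-((k : ℝ) + 1) * c) := by
  have hv1 : v (k + 1) ≤ 1 := le_hasSum hsum k fun j _ => hv j
  have hexp : exp (-((k : ℝ) + 1) * y) ≤ exp (-((k : ℝ) + 1) * c) :=
    exp_le_exp.2 (by nlinarith)
  calc ((k : ℝ) + 1) ^ n * v (k + 1) * exp (-((k : ℝ) + 1) * y)
      ≤ ((k : ℝ) + 1) ^ n * 1 * exp (-((k : ℝ) + 1) * c) := by gcongr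
    _ = _ := by rw [mul_one]

theorem summable_tiltedMoment (hv : ∀ k, 0 ≤ v (k + 1)) (hsum : HasSum (fun k => v (k + 1)) 1)
    (n : ℕ) {y : ℝ} (hy : 0 < y) :
    Summable fun k : ℕ => ((k : ℝ) + 1) ^ n * v (k + 1) * exp (-((k : ℝ) + 1) * y) :=
  (summable_succ_pow_mul_exp_neg n hy).of_nonneg_of_le
    (fun k => by have := hv k; positivity) fun k => succ_pow_mul_mul_exp_le hv hsum n k le_rfl

theorem hasDerivAt_tiltedMoment (hv : ∀ k, 0 ≤ v (k + 1))
    (hsum : HasSum (fun k => v (k + 1)) 1) (n : ℕ) {y : ℝ} (hy : 0 < y) :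
    HasDerivAt (tiltedMoment v n) (-tiltedMoment v (n + 1) y) y := by
  have hterm : ∀ (k : ℕ) (z : ℝ), HasDerivAt
      (fun t => ((k : ℝ) + 1) ^ n * v (k + 1) * exp (-((k : ℝ) + 1) * t))
      (-(((k : ℝ) + 1) ^ (n + 1) * v (k + 1) * exp (-((k : ℝ) + 1) * z))) z := fun k z =>
    (((hasDerivAt_id' z).const_mul (-((k : ℝ) + 1))).exp.const_mul
      (((k : ℝ) + 1) ^ n * v (k + 1))).congr_deriv (by ring)
  have hy2 : 0 < y / 2 := half_pos hy
  have h := hasDerivAt_tsum_of_isPreconnected (summable_succ_pow_mul_exp_neg (n + 1) hy2)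
    isOpen_Ioi isPreconnected_Ioi (fun k z _ => hterm k z) (fun k z hz => ?_)
    (half_lt_self hy) (summable_tiltedMoment hv hsum n hy) (half_lt_self hy)
  · rwa [tsum_neg] at h
  · rw [norm_neg, norm_of_nonneg (by have := hv k; positivity)]
    exact succ_pow_mul_mul_exp_le hv hsum (n + 1) k hz.le

theorem tiltedMoment_pos (hv : ∀ k, 0 ≤ v (k + 1)) (hsum : HasSum (fun k => v (k + 1)) 1)
    (n : ℕ) {y : ℝ} (hy : 0 < y) : 0 < tiltedMoment v n y := by
  obtain ⟨k, hk⟩ : ∃ k, 0 < v (k + 1) := by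
    by_contra! h
    have hzero : (fun k => v (k + 1)) = 0 := funext fun k => le_antisymm (h k) (hv k)
    rw [hzero] at hsum
    exact zero_ne_one (hasSum_zero.unique hsum)
  exact (summable_tiltedMoment hv hsum n hy).tsum_pos (fun k => by have := hv k; positivity) k
    (by positivity)

theorem genFun_eq_tiltedMoment_sub_one (v : ℕ → ℝ) :
    genFun v = fun x => tiltedMoment v 0 x - 1 := by
  funext x
  simp only [genFun, tiltedMoment, pow_zero, one_mul]

theorem hasDerivAt_genFun (hv : ∀ k, 0 ≤ v (k + 1)) (hsum : HasSum (fun k => v (k + 1)) 1)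
    {y : ℝ} (hy : 0 < y) : HasDerivAt (genFun v) (-tiltedMoment v 1 y) y := by
  rw [genFun_eq_tiltedMoment_sub_one]
  exact (hasDerivAt_tiltedMoment hv hsum 0 hy).sub_const 1

theorem deriv_genFun (hv : ∀ k, 0 ≤ v (k + 1)) (hsum : HasSum (fun k => v (k + 1)) 1)
    {y : ℝ} (hy : 0 < y) : deriv (genFun v) y = -tiltedMoment v 1 y :=
  (hasDerivAt_genFun hv hsum hy).deriv

theorem differentiableAt_deriv_genFun (hv : ∀ k, 0 ≤ v (k + 1))
    (hsum : HasSum (fun k => v (k + 1)) 1) {y : ℝ} (hy : 0 < y) :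
    DifferentiableAt ℝ (deriv (genFun v)) y := by
  have heq : deriv (genFun v) =ᶠ[𝓝 y] fun t => -tiltedMoment v 1 t := by
    filter_upwards [Ioi_mem_nhds hy] with t ht
    exact deriv_genFun hv hsum ht
  exact ((hasDerivAt_tiltedMoment hv hsum 1 hy).neg.congr_of_eventuallyEq heq).differentiableAt

theorem tendsto_genFun_nhdsGT_zero (hv : ∀ k, 0 ≤ v (k + 1))
    (hsum : HasSum (fun k => v (k + 1)) 1) : Tendsto (genFun v) (𝓝[>] 0) (𝓝 0) := by
  have hcont : ContinuousOn (genFun v) (Ici 0) := by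
    refine (continuousOn_tsum (fun k => by fun_prop) hsum.summable fun k y hy => ?_).sub
      continuousOn_const
    rw [norm_of_nonneg (by have := hv k; positivity)]
    have hexp : exp (-((k : ℝ) + 1) * y) ≤ 1 :=
      exp_le_one_iff.2 (by nlinarith [mem_Ici.1 hy])
    nlinarith [hv k]
  have h0 : genFun v 0 = 0 := by simp [genFun, hsum.tsum_eq]
  have h := (hcont 0 self_mem_Ici).tendsto.mono_left (nhdsWithin_mono _ Ioi_subset_Ici_self)
  rwa [h0] at h

end TiltedMoment

theorem rpow_intCast_div_two {c : ℝ} (hc : 0 ≤ c) (n : ℤ) : c ^ ((n : ℝ) / 2) = √c ^ n := by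
  rw [sqrt_eq_rpow, ← rpow_intCast, ← rpow_mul hc]
  ring_nf

theorem two_rpow_half_mul_rpow_half (c x : ℝ) :
    (2 : ℝ) ^ ((1 : ℝ) / 2) * c ^ ((1 : ℝ) / 2) * x ^ ((1 : ℝ) / 2) = √c * √(2 * x) := by
  rw [← sqrt_eq_rpow, ← sqrt_eq_rpow, ← sqrt_eq_rpow, sqrt_mul zero_le_two]
  ring

theorem two_rpow_neg_half_mul_rpow_neg_half {c x : ℝ} (hc : 0 ≤ c) (hx : 0 ≤ x) (A : ℝ) :
    (2 : ℝ) ^ (-(1 : ℝ) / 2) * A * c ^ (-(1 : ℝ) / 2) * x ^ (-(1 : ℝ) / 2)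
      = A / √c / √(2 * x) := by
  have e : -(1 : ℝ) / 2 = ((-1 : ℤ) : ℝ) / 2 := by norm_num
  rw [e, rpow_intCast_div_two zero_le_two, rpow_intCast_div_two hc, rpow_intCast_div_two hx,
    sqrt_mul zero_le_two]
  simp only [zpow_neg, zpow_one]
  ring

theorem two_rpow_neg_three_half_mul_rpow_neg_five_half {c x : ℝ} (hc : 0 ≤ c) (hx : 0 ≤ x)
    (A : ℝ) :
    (2 : ℝ) ^ (-(3 : ℝ) / 2) * A ^ 3 * c ^ (-(5 : ℝ) / 2) * x ^ (-(3 : ℝ) / 2)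
      = (A / √c) ^ 3 / c / √(2 * x) ^ 3 := by
  have e3 : -(3 : ℝ) / 2 = ((-3 : ℤ) : ℝ) / 2 := by norm_num
  have e5 : -(5 : ℝ) / 2 = ((-5 : ℤ) : ℝ) / 2 := by norm_num
  have hc5 : √c ^ 5 = √c ^ 3 * c := by rw [show √c ^ 5 = √c ^ 3 * √c ^ 2 by ring, sq_sqrt hc]
  rw [e3, e5, rpow_intCast_div_two zero_le_two, rpow_intCast_div_two hc,
    rpow_intCast_div_two hx, sqrt_mul zero_le_two]
  simp only [zpow_neg, zpow_ofNat, hc5]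
  ring

theorem div_sqrt_le_sqrt {m M : ℝ} (hm : 0 < m) (h : m ≤ M) : m / √M ≤ √m := by
  calc m / √M ≤ m / √m := div_le_div_of_nonneg_left hm.le (sqrt_pos.2 hm) (sqrt_le_sqrt h)
    _ = √m := div_sqrt

theorem sqrt_le_div_sqrt {m M : ℝ} (hm : 0 < m) (h : m ≤ M) : √M ≤ M / √m := by
  calc √M = M / √M := div_sqrt.symm
    _ ≤ M / √m := div_le_div_of_nonneg_left (hm.trans_le h).le (sqrt_pos.2 hm) (sqrt_le_sqrt h)

theorem rpow_bounds_of_sqrt_bounds {x m M U W E : ℝ} (hx : 0 < x) (hm : 0 < m)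
    (hU : √m * √(2 * x) ≤ U ∧ U ≤ √M * √(2 * x)) (hW : √m / √(2 * x) ≤ W ∧ W ≤ √M / √(2 * x))
    (hE : E ∈ Icc m M) :
    ((2 : ℝ) ^ ((1:ℝ)/2) * m ^ ((1:ℝ)/2) * x ^ ((1:ℝ)/2) ≤ U ∧
        U ≤ (2 : ℝ) ^ ((1:ℝ)/2) * M ^ ((1:ℝ)/2) * x ^ ((1:ℝ)/2)) ∧
      ((2 : ℝ) ^ (-(1:ℝ)/2) * m * M ^ (-(1:ℝ)/2) * x ^ (-(1:ℝ)/2) ≤ W ∧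
        W ≤ (2 : ℝ) ^ (-(1:ℝ)/2) * M * m ^ (-(1:ℝ)/2) * x ^ (-(1:ℝ)/2)) ∧
      ((2 : ℝ) ^ (-(3:ℝ)/2) * m ^ 3 * M ^ (-(5:ℝ)/2) * x ^ (-(3:ℝ)/2) ≤ W ^ 3 / E ∧
        W ^ 3 / E ≤ (2 : ℝ) ^ (-(3:ℝ)/2) * M ^ 3 * m ^ (-(5:ℝ)/2) * x ^ (-(3:ℝ)/2)) ∧
      (m ≤ U * W ∧ U * W ≤ M) := by
  have hmM : m ≤ M := hE.1.trans hE.2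
  have hM : 0 < M := hm.trans_le hmM
  have hE0 : 0 < E := hm.trans_le hE.1
  have hW0 : 0 < W := (by positivity : 0 < √m / √(2 * x)).trans_le hW.1
  rw [two_rpow_half_mul_rpow_half, two_rpow_half_mul_rpow_half,
    two_rpow_neg_half_mul_rpow_neg_half hM.le hx.le,
    two_rpow_neg_half_mul_rpow_neg_half hm.le hx.le,
    two_rpow_neg_three_half_mul_rpow_neg_five_half hM.le hx.le,
    two_rpow_neg_three_half_mul_rpow_neg_five_half hm.le hx.le]
  refine ⟨hU, ⟨?_, ?_⟩, ⟨?_, ?_⟩, ?_, ?_⟩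
  · calc m / √M / √(2 * x) ≤ √m / √(2 * x) := by gcongr; exact div_sqrt_le_sqrt hm hmM
      _ ≤ W := hW.1
  · calc W ≤ √M / √(2 * x) := hW.2
      _ ≤ M / √m / √(2 * x) := by gcongr; exact sqrt_le_div_sqrt hm hmM
  · calc (m / √M) ^ 3 / M / √(2 * x) ^ 3 ≤ √m ^ 3 / M / √(2 * x) ^ 3 := by
          gcongr; exact div_sqrt_le_sqrt hm hmM
      _ = (√m / √(2 * x)) ^ 3 / M := by ring
      _ ≤ W ^ 3 / E := div_le_div₀ (by positivity) (by gcongr; exact hW.1) hE0 hE.2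
  · calc W ^ 3 / E ≤ (√M / √(2 * x)) ^ 3 / m := div_le_div₀ (by positivity)
          (pow_le_pow_left₀ hW0.le hW.2 3) hm hE.1
      _ = √M ^ 3 / m / √(2 * x) ^ 3 := by ring
      _ ≤ (M / √m) ^ 3 / m / √(2 * x) ^ 3 := by gcongr; exact sqrt_le_div_sqrt hm hmM
  · calc m = √m * √(2 * x) * (√m / √(2 * x)) := by field_simp; exact (sq_sqrt hm.le).symm
      _ ≤ U * W := mul_le_mul hU.1 hW.1 (by positivity) ((by positivity : (0 : ℝ) ≤ _).trans hU.1)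
  · calc U * W ≤ √M * √(2 * x) * (√M / √(2 * x)) := mul_le_mul hU.2 hW.2 hW0.le (by positivity)
      _ = M := by field_simp; exact sq_sqrt hM.le

/-- two-sided bounds on `V`, `V'`, `V''` and `V·V'` in terms of
`E*(x) = sup_{0<y≤x} E(y)` (assumed finite, i.e. a least upper bound exists) and
`E_*(x) = inf_{0<y≤x} E(y)` (assumed positive), under the assumption
`V'(0⁺) = −∞`. -/
theorem genFun_calculus_bounds (v : ℕ → ℝ)
    (hnn : ∀ k : ℕ, 1 ≤ k → 0 ≤ v k)
    (hsum : HasSum (fun k : ℕ => v (k + 1)) 1)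
    (hderiv : Filter.Tendsto (deriv (genFun v)) (nhdsWithin 0 (Set.Ioi 0)) Filter.atBot) :
    ∀ x : ℝ, 0 < x → ∀ Estar Einf : ℝ,
      IsLUB (EFun v '' Set.Ioc 0 x) Estar →
      IsGLB (EFun v '' Set.Ioc 0 x) Einf →
      0 < Einf →
      ((2 : ℝ) ^ ((1:ℝ)/2) * Einf ^ ((1:ℝ)/2) * x ^ ((1:ℝ)/2) ≤ -genFun v x ∧
        -genFun v x ≤ (2 : ℝ) ^ ((1:ℝ)/2) * Estar ^ ((1:ℝ)/2) * x ^ ((1:ℝ)/2)) ∧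
      ((2 : ℝ) ^ (-(1:ℝ)/2) * Einf * Estar ^ (-(1:ℝ)/2) * x ^ (-(1:ℝ)/2)
          ≤ -deriv (genFun v) x ∧
        -deriv (genFun v) x
          ≤ (2 : ℝ) ^ (-(1:ℝ)/2) * Estar * Einf ^ (-(1:ℝ)/2) * x ^ (-(1:ℝ)/2)) ∧
      ((2 : ℝ) ^ (-(3:ℝ)/2) * Einf ^ 3 * Estar ^ (-(5:ℝ)/2) * x ^ (-(3:ℝ)/2)
          ≤ iteratedDeriv 2 (genFun v) x ∧
        iteratedDeriv 2 (genFun v) x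
          ≤ (2 : ℝ) ^ (-(3:ℝ)/2) * Estar ^ 3 * Einf ^ (-(5:ℝ)/2) * x ^ (-(3:ℝ)/2)) ∧
      (Einf ≤ genFun v x * deriv (genFun v) x ∧
        genFun v x * deriv (genFun v) x ≤ Estar) := by
  intro x hx Estar Einf hub hlb hEinf
  have hv : ∀ k, 0 ≤ v (k + 1) := fun k => hnn (k + 1) k.succ_pos
  have hE : ∀ y ∈ Ioc 0 x, EFun v y ∈ Icc Einf Estar := fun y hy =>
    ⟨hlb.1 (mem_image_of_mem _ hy), hub.1 (mem_image_of_mem _ hy)⟩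
  have hdiff' : ∀ y ∈ Ioc 0 x, DifferentiableAt ℝ (deriv (genFun v)) y :=
    fun y hy => differentiableAt_deriv_genFun hv hsum hy.1
  have hneg : ∀ y ∈ Ioc 0 x, deriv (genFun v) y < 0 := fun y hy => by
    rw [deriv_genFun hv hsum hy.1, neg_lt_zero]
    exact tiltedMoment_pos hv hsum 1 hy.1
  have hx' : x ∈ Ioc 0 x := ⟨hx, le_rfl⟩
  have hU := neg_bounds_of_derivCubeRatio_mem_Icc hx hEinf
    (fun y hy => (hasDerivAt_genFun hv hsum hy.1).differentiableAt) hdiff'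
    (tendsto_genFun_nhdsGT_zero hv hsum) hderiv hneg hE
  have hW := neg_deriv_bounds_of_derivCubeRatio_mem_Icc hx hEinf hdiff' hderiv (hneg x hx') hE
  have hV'' : iteratedDeriv 2 (genFun v) x = (-deriv (genFun v) x) ^ 3 / EFun v x := by
    rw [EFun, Odd.neg_pow (by decide), div_div_cancel₀]
    exact neg_ne_zero.2 (pow_ne_zero 3 (hneg x hx').ne)
  rw [hV'', ← neg_mul_neg (genFun v x)]
  exact rpow_bounds_of_sqrt_bounds hx hEinf hU hW (hE x hx')
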